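/- Set ℏ = m = ω = 1 and let ℓ_k := {(x,p) ∈ ℝ² | x cos t_k + p sin t_k = x_k} for k = 1,2,3, where t_j − t_k ∉ πℤ for j ≠ k. Let A_{kl} be the intersection point of ℓ_k and ℓ_l. Then twice the signed area of the triangle A₁₂A₂₃A₃₁ with respect to the symplectic form dx ∧ dp is given by 2·S(A₁₂,A₂₃,A₃₁) = −(x₁ sin(t₂−t₃) + x₂ sin(t₃−t₁) + x₃ sin(t₁−t₂))² / (sin(t₂−t₃) sin(t₃−t₁) sin(t₁−t₂)). -/

import Mathlib

open Real

/-- The standard symplectic form on the phase plane: `σ((x,p),(x',p')) = xp' − px'`. -/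
noncomputable def symp2 (a b : ℝ × ℝ) : ℝ := a.1 * b.2 - a.2 * b.1

/-- The signed area of the triangle `ABC` with respect to `dx ∧ dp`:
`(1/2)[σ(A,B) + σ(B,C) + σ(C,A)]`. -/
noncomputable def triArea (A B C : ℝ × ℝ) : ℝ :=
  (1 / 2) * (symp2 A B + symp2 B C + symp2 C A)

/-! Lines are written `{A | A.1 * n.1 + A.2 * n.2 = c}` with normal vector `n`. Three lines with
pairwise non-parallel normals bound a triangle of doubled area `E² / (σ(n₁,n₂) σ(n₂,n₃) σ(n₃,n₁))`,
where `E = c₁ σ(n₂,n₃) + c₂ σ(n₃,n₁) + c₃ σ(n₁,n₂)` is the determinant of the system; for unit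
normals `(cos t, sin t)` one has `σ(n_k, n_l) = sin (t_l − t_k)`. -/

/-- Cramer's rule for the intersection point of two lines. -/
theorem symp2_smul_eq_of_mem_lines {n m A : ℝ × ℝ} {c d : ℝ}
    (hn : A.1 * n.1 + A.2 * n.2 = c) (hm : A.1 * m.1 + A.2 * m.2 = d) :
    symp2 n m • A = (c * m.2 - d * n.2, d * n.1 - c * m.1) := by
  ext <;> simp only [symp2, Prod.smul_fst, Prod.smul_snd, smul_eq_mul]
  · linear_combination m.2 * hn - n.2 * hm
  · linear_combination n.1 * hm - m.1 * hn

theorem two_mul_triArea_of_mem_lines {n₁ n₂ n₃ A₁₂ A₂₃ A₃₁ : ℝ × ℝ} {c₁ c₂ c₃ : ℝ}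
    (h₁₂ : symp2 n₁ n₂ ≠ 0) (h₂₃ : symp2 n₂ n₃ ≠ 0) (h₃₁ : symp2 n₃ n₁ ≠ 0)
    (hA₁₂ : A₁₂.1 * n₁.1 + A₁₂.2 * n₁.2 = c₁ ∧ A₁₂.1 * n₂.1 + A₁₂.2 * n₂.2 = c₂)
    (hA₂₃ : A₂₃.1 * n₂.1 + A₂₃.2 * n₂.2 = c₂ ∧ A₂₃.1 * n₃.1 + A₂₃.2 * n₃.2 = c₃)
    (hA₃₁ : A₃₁.1 * n₃.1 + A₃₁.2 * n₃.2 = c₃ ∧ A₃₁.1 * n₁.1 + A₃₁.2 * n₁.2 = c₁) :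
    2 * triArea A₁₂ A₂₃ A₃₁ =
      (c₁ * symp2 n₂ n₃ + c₂ * symp2 n₃ n₁ + c₃ * symp2 n₁ n₂) ^ 2 /
        (symp2 n₁ n₂ * symp2 n₂ n₃ * symp2 n₃ n₁) := by
  set D₁₂ := symp2 n₁ n₂
  set D₂₃ := symp2 n₂ n₃
  set D₃₁ := symp2 n₃ n₁
  -- by bilinearity of `symp2`, clearing denominators replaces each vertex by its Cramer numerator
  have scaled : D₁₂ * D₂₃ * D₃₁ * (2 * triArea A₁₂ A₂₃ A₃₁) =
      D₃₁ * symp2 (D₁₂ • A₁₂) (D₂₃ • A₂₃) + D₁₂ * symp2 (D₂₃ • A₂₃) (D₃₁ • A₃₁) +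
        D₂₃ * symp2 (D₃₁ • A₃₁) (D₁₂ • A₁₂) := by
    simp only [triArea, symp2, Prod.smul_fst, Prod.smul_snd, smul_eq_mul]
    ring
  rw [symp2_smul_eq_of_mem_lines hA₁₂.1 hA₁₂.2, symp2_smul_eq_of_mem_lines hA₂₃.1 hA₂₃.2,
    symp2_smul_eq_of_mem_lines hA₃₁.1 hA₃₁.2] at scaled
  rw [eq_div_iff (mul_ne_zero (mul_ne_zero h₁₂ h₂₃) h₃₁)]
  simp only [D₁₂, D₂₃, D₃₁, symp2] at scaled ⊢
  linear_combination scaled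

theorem symp2_cos_sin (s t : ℝ) : symp2 (cos s, sin s) (cos t, sin t) = -sin (s - t) := by
  rw [symp2, sin_sub]
  ring

theorem sin_sub_ne_zero {s t : ℝ} (h : ¬ ∃ n : ℤ, s - t = n * π) : sin (s - t) ≠ 0 :=
  fun h₀ => h ((sin_eq_zero_iff.1 h₀).imp fun _ hn => hn.symm)

/-- With `ℏ = m = ω = 1` and lines `ℓ_k = {(x,p) | x cos t_k + p sin t_k = x_k}` with
pairwise intersection points `A_{kl}`, twice the signed area of the triangle
`A₁₂A₂₃A₃₁` is
`−(x₁ sin(t₂−t₃) + x₂ sin(t₃−t₁) + x₃ sin(t₁−t₂))² / (sin(t₂−t₃) sin(t₃−t₁) sin(t₁−t₂))`. -/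
theorem double_signed_area_of_line_triangle
    (t₁ t₂ t₃ x₁ x₂ x₃ : ℝ)
    (h12 : ¬ ∃ n : ℤ, t₁ - t₂ = n * π)
    (h23 : ¬ ∃ n : ℤ, t₂ - t₃ = n * π)
    (h31 : ¬ ∃ n : ℤ, t₃ - t₁ = n * π)
    (A₁₂ A₂₃ A₃₁ : ℝ × ℝ)
    (hA₁₂ : A₁₂.1 * Real.cos t₁ + A₁₂.2 * Real.sin t₁ = x₁ ∧
            A₁₂.1 * Real.cos t₂ + A₁₂.2 * Real.sin t₂ = x₂)
    (hA₂₃ : A₂₃.1 * Real.cos t₂ + A₂₃.2 * Real.sin t₂ = x₂ ∧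
            A₂₃.1 * Real.cos t₃ + A₂₃.2 * Real.sin t₃ = x₃)
    (hA₃₁ : A₃₁.1 * Real.cos t₃ + A₃₁.2 * Real.sin t₃ = x₃ ∧
            A₃₁.1 * Real.cos t₁ + A₃₁.2 * Real.sin t₁ = x₁) :
    2 * triArea A₁₂ A₂₃ A₃₁
      = -(x₁ * Real.sin (t₂ - t₃) + x₂ * Real.sin (t₃ - t₁) + x₃ * Real.sin (t₁ - t₂)) ^ 2 /
          (Real.sin (t₂ - t₃) * Real.sin (t₃ - t₁) * Real.sin (t₁ - t₂)) := by
  have hσ {s t : ℝ} (h : ¬ ∃ n : ℤ, s - t = n * π) : symp2 (cos s, sin s) (cos t, sin t) ≠ 0 := by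
    rw [symp2_cos_sin]
    exact neg_ne_zero.2 (sin_sub_ne_zero h)
  rw [two_mul_triArea_of_mem_lines (hσ h12) (hσ h23) (hσ h31) hA₁₂ hA₂₃ hA₃₁]
  simp only [symp2_cos_sin]
  ring
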